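/- arXiv:2008.02561 — 3 statements merged into one kernel-verified Lean document; each statement's English description precedes it below -/
import Mathlib

section
/- For x > 0, τ > 0 and δ ∈ [0, π/2), the modified Bessel function of purely imaginary order satisfies |K_{iτ}(x)| ≤ e^{-δτ} K₀(x cos δ), where K_{iτ}(x) = ∫₀^∞ e^{-x cosh t} cos(τ t) dt and K₀(y) = ∫₀^∞ e^{-y cosh t} dt. -/
/-!
The integrand extends to the entire function `F(z) = exp (-x cosh z + iτz)`, with
`|F(t + is)| = e^{-sτ} e^{-x cos s cosh t}`. Cauchy's theorem on the rectangle `[0, R] × [0, δ]`,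
whose side at `Re z = R` vanishes as `R → ∞`, moves `∫₀^∞ F(t) dt` to the line `Im z = δ` at the
cost of `i ∫₀^δ F(is) ds`. Since `F` is real on the imaginary axis this correction is purely
imaginary, so `K_{iτ}(x) = Re ∫₀^∞ F(t + iδ) dt`, whose modulus is at most
`∫₀^∞ |F(t + iδ)| dt = e^{-δτ} K₀(x cos δ)`.
-/

open MeasureTheory Real

/-- K_{iτ}(x) = ∫₀^∞ e^{-x cosh t} cos(τ t) dt. -/
noncomputable def Kim (τ x : ℝ) : ℝ :=
  ∫ t in Set.Ioi (0:ℝ), Real.exp (-x * Real.cosh t) * Real.cos (τ * t)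

/-- K₀(y) = ∫₀^∞ e^{-y cosh t} dt. -/
noncomputable def K0 (y : ℝ) : ℝ :=
  ∫ t in Set.Ioi (0:ℝ), Real.exp (-y * Real.cosh t)

open Set Filter Topology Complex

lemma Real.self_le_cosh (t : ℝ) : t ≤ Real.cosh t := by
  rcases le_or_gt 0 t with ht | ht
  · exact (Real.self_le_sinh_iff.2 ht).trans (Real.sinh_lt_cosh t).le
  · exact ht.le.trans (Real.cosh_pos t).le

lemma Real.tendsto_cosh_atTop : Tendsto Real.cosh atTop atTop :=
  tendsto_atTop_mono Real.self_le_cosh tendsto_id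

lemma integrableOn_exp_neg_mul_cosh_Ioi {c : ℝ} (hc : 0 < c) (a : ℝ) :
    IntegrableOn (fun t => Real.exp (-c * Real.cosh t)) (Ioi a) := by
  refine (exp_neg_integrableOn_Ioi a hc).mono' (by fun_prop) (ae_of_all _ fun t => ?_)
  rw [norm_of_nonneg (Real.exp_nonneg _)]
  exact Real.exp_le_exp.2 (by nlinarith [Real.self_le_cosh t])

noncomputable def besselKKernel (x τ : ℝ) (z : ℂ) : ℂ :=
  cexp (-x * cosh z + I * τ * z)

section Algebra

variable (x τ : ℝ)

lemma differentiable_besselKKernel : Differentiable ℂ (besselKKernel x τ) := by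
  unfold besselKKernel
  fun_prop

lemma norm_besselKKernel (t s : ℝ) :
    ‖besselKKernel x τ (t + s * I)‖
      = Real.exp (-s * τ) * Real.exp (-(x * Real.cos s) * Real.cosh t) := by
  rw [besselKKernel, norm_exp, ← Real.exp_add, Complex.cosh_add, Complex.cosh_mul_I,
    Complex.sinh_mul_I, ← ofReal_cosh, ← ofReal_sinh, ← ofReal_cos, ← ofReal_sin]
  congr 1
  simp only [add_re, mul_re, neg_re, ofReal_re, ofReal_im, I_re, I_im, mul_im, add_im, neg_im]
  ring

lemma re_besselKKernel_ofReal (t : ℝ) :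
    (besselKKernel x τ t).re = Real.exp (-x * Real.cosh t) * Real.cos (τ * t) := by
  rw [besselKKernel, ← ofReal_cosh, exp_re]
  simp

lemma besselKKernel_mul_I (s : ℝ) :
    besselKKernel x τ (s * I) = (Real.exp (-x * Real.cos s - τ * s) : ℝ) := by
  rw [besselKKernel, Complex.cosh_mul_I, ← ofReal_cos, ofReal_exp]
  congr 1
  push_cast
  linear_combination (τ * s : ℂ) * I_mul_I

end Algebra

section ContourShift

variable {x : ℝ} (τ : ℝ)

lemma norm_besselKKernel_le (hx : 0 ≤ x) {s δ : ℝ} (hs : |s| ≤ |δ|) (hδ : |δ| ≤ π) (t : ℝ) :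
    ‖besselKKernel x τ (t + s * I)‖
      ≤ Real.exp (|δ| * |τ|) * Real.exp (-(x * Real.cos δ) * Real.cosh t) := by
  have hcos : Real.cos δ ≤ Real.cos s := by
    rw [← Real.cos_abs s, ← Real.cos_abs δ]
    exact Real.cos_le_cos_of_nonneg_of_le_pi (abs_nonneg s) hδ hs
  have hsτ : -s * τ ≤ |δ| * |τ| := by
    nlinarith [neg_le_abs (s * τ), abs_mul s τ, mul_le_mul_of_nonneg_right hs (abs_nonneg τ)]
  have hcosh : x * Real.cos δ * Real.cosh t ≤ x * Real.cos s * Real.cosh t := by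
    gcongr
  rw [norm_besselKKernel, ← Real.exp_add, ← Real.exp_add]
  exact Real.exp_le_exp.2 (by linarith)

lemma integrableOn_besselKKernel (hx : 0 < x) {s : ℝ} (hs : |s| < π / 2) :
    IntegrableOn (fun t : ℝ => besselKKernel x τ (t + s * I)) (Ioi 0) := by
  have hc : 0 < x * Real.cos s := mul_pos hx (Real.cos_pos_of_mem_Ioo (abs_lt.1 hs))
  exact ((integrableOn_exp_neg_mul_cosh_Ioi hc 0).const_mul (Real.exp (-s * τ))).mono'
    (by unfold besselKKernel; fun_prop) (ae_of_all _ fun t => (norm_besselKKernel x τ t s).le)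

lemma integrableOn_besselKKernel_ofReal (hx : 0 < x) :
    IntegrableOn (fun t : ℝ => besselKKernel x τ t) (Ioi 0) := by
  simpa using integrableOn_besselKKernel τ hx (s := 0) (by simp [Real.pi_pos])

lemma tendsto_integral_besselKKernel_vertical (hx : 0 < x) {δ : ℝ} (hδ : |δ| < π / 2) :
    Tendsto (fun R : ℝ => ∫ s in (0:ℝ)..δ, besselKKernel x τ (R + s * I)) atTop (𝓝 0) := by
  have hc : 0 < x * Real.cos δ := mul_pos hx (Real.cos_pos_of_mem_Ioo (abs_lt.1 hδ))
  have hbound : ∀ R : ℝ, ‖∫ s in (0:ℝ)..δ, besselKKernel x τ (R + s * I)‖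
      ≤ Real.exp (|δ| * |τ|) * Real.exp (-(x * Real.cos δ) * Real.cosh R) * |δ - 0| := by
    refine fun R => intervalIntegral.norm_integral_le_of_norm_le_const fun s hs => ?_
    have hs : |s| ≤ |δ| := by simpa using abs_sub_left_of_mem_uIcc (uIoc_subset_uIcc hs)
    exact norm_besselKKernel_le τ hx.le hs (by linarith [Real.pi_pos]) R
  have hdecay : Tendsto (fun R => Real.exp (-(x * Real.cos δ) * Real.cosh R)) atTop (𝓝 0) :=
    Real.tendsto_exp_atBot.comp
      (Real.tendsto_cosh_atTop.const_mul_atTop_of_neg (neg_lt_zero.2 hc))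
  refine squeeze_zero_norm hbound ?_
  simpa using (hdecay.const_mul (Real.exp (|δ| * |τ|))).mul_const |δ - 0|

lemma integral_besselKKernel_shift (hx : 0 < x) {δ : ℝ} (hδ : |δ| < π / 2) :
    ∫ t : ℝ in Ioi 0, besselKKernel x τ (t + δ * I)
      = (∫ t : ℝ in Ioi 0, besselKKernel x τ t)
        - I * ∫ s in (0:ℝ)..δ, besselKKernel x τ (s * I) := by
  have hrect : ∀ R : ℝ, (∫ t in (0:ℝ)..R, besselKKernel x τ t)
      - (∫ t in (0:ℝ)..R, besselKKernel x τ (t + δ * I))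
      + I • (∫ s in (0:ℝ)..δ, besselKKernel x τ (R + s * I))
      - I • (∫ s in (0:ℝ)..δ, besselKKernel x τ (s * I)) = 0 := fun R => by
    simpa using integral_boundary_rect_eq_zero_of_differentiableOn (besselKKernel x τ) 0
      (R + δ * I) (differentiable_besselKKernel x τ).differentiableOn
  have hlim := (((intervalIntegral_tendsto_integral_Ioi 0
      (integrableOn_besselKKernel_ofReal τ hx) tendsto_id).sub
      (intervalIntegral_tendsto_integral_Ioi 0 (integrableOn_besselKKernel τ hx hδ)
        tendsto_id)).add ((tendsto_integral_besselKKernel_vertical τ hx hδ).const_smul I)).sub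
      (tendsto_const_nhds (x := I • ∫ s in (0:ℝ)..δ, besselKKernel x τ (s * I)))
  have h0 := tendsto_nhds_unique hlim (by simpa only [id, hrect] using tendsto_const_nhds)
  simp only [smul_eq_mul] at h0
  linear_combination -h0

lemma re_integral_besselKKernel_shift (hx : 0 < x) {δ : ℝ} (hδ : |δ| < π / 2) :
    (∫ t : ℝ in Ioi 0, besselKKernel x τ (t + δ * I)).re = Kim τ x := by
  have himag : (I * ∫ s in (0:ℝ)..δ, besselKKernel x τ (s * I)).re = 0 := by
    simp only [besselKKernel_mul_I, intervalIntegral.integral_ofReal, I_mul_re, ofReal_im,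
      neg_zero]
  rw [integral_besselKKernel_shift τ hx hδ, sub_re, himag, sub_zero, Kim]
  refine (integral_re (integrableOn_besselKKernel_ofReal τ hx)).symm.trans ?_
  simp only [RCLike.re_to_complex, re_besselKKernel_ofReal]

end ContourShift

theorem stmt1_general (x τ δ : ℝ) (hx : 0 < x) (hδ : δ ∈ Set.Ico 0 (π/2)) :
    |Kim τ x| ≤ Real.exp (-δ * τ) * K0 (x * Real.cos δ) := by
  have hδ' : |δ| < π / 2 := by rw [abs_of_nonneg hδ.1]; exact hδ.2
  calc |Kim τ x| = |(∫ t : ℝ in Ioi 0, besselKKernel x τ (t + δ * I)).re| := by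
        rw [re_integral_besselKKernel_shift τ hx hδ']
    _ ≤ ‖∫ t : ℝ in Ioi 0, besselKKernel x τ (t + δ * I)‖ := abs_re_le_norm _
    _ ≤ ∫ t : ℝ in Ioi 0, ‖besselKKernel x τ (t + δ * I)‖ := norm_integral_le_integral_norm _
    _ = Real.exp (-δ * τ) * K0 (x * Real.cos δ) := by
        simp only [norm_besselKKernel, integral_const_mul, K0]

theorem stmt1 (x τ δ : ℝ) (hx : 0 < x) (hτ : 0 < τ) (hδ : δ ∈ Set.Ico 0 (π/2)) :
    |Kim τ x| ≤ Real.exp (-δ * τ) * K0 (x * Real.cos δ) :=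
  stmt1_general x τ δ hx hδ
end

section
/- Let ψ : ℝ → ℂ be a 2π-periodic function satisfying the Lipschitz condition |ψ(u) − ψ(v)| ≤ C|u − v| for all u, v. Then for every t ∈ [−π, π], the limit as N → ∞ of (1/(2π)) ∫_{−π}^{π} [ψ(u+t) − ψ(−u−t) − ψ(t) + ψ(−t)] · sin((2N+1)u/2)/sin(u/2) du equals 0. -/
/-! The integrand is `sin ((N + 1/2) u) • g u` with `g u = (sin (u/2))⁻¹ • f u`, where
`f u = ψ(u+t) - ψ(-u-t) - ψ(t) + ψ(-t)`. The Lipschitz condition gives `‖f u‖ ≤ 2C|u|`, and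
`|u| ≤ π |sin (u/2)|` on `[-π, π]`, so `g` is bounded there, hence integrable. Writing the sine as
a difference of two exponentials reduces the limit to the Riemann–Lebesgue lemma. -/

open MeasureTheory Real Filter

section RiemannLebesgue

variable {E : Type*} [NormedAddCommGroup E] [NormedSpace ℂ E]

open Complex (I)

theorem tendsto_integral_exp_mul_I_smul_cocompact (f : ℝ → E) :
    Tendsto (fun ω : ℝ => ∫ v, Complex.exp (↑(ω * v) * I) • f v) (cocompact ℝ) (nhds 0) := by
  have hc : -(2 * π)⁻¹ ≠ 0 := by simp [pi_ne_zero]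
  have hscale : Tendsto (fun ω : ℝ => -(2 * π)⁻¹ * ω) (cocompact ℝ) (cocompact ℝ) :=
    (Homeomorph.mulLeft₀ _ hc).map_cocompact.le
  refine ((Real.tendsto_integral_exp_smul_cocompact f).comp hscale).congr fun ω => ?_
  refine integral_congr_ae (ae_of_all _ fun v => ?_)
  simp only [Circle.smul_def, Real.fourierChar_apply]
  congr 4
  field_simp

theorem tendsto_integral_sin_mul_smul_atTop {f : ℝ → E} (hf : Integrable f) :
    Tendsto (fun ω : ℝ => ∫ v, Real.sin (ω * v) • f v) atTop (nhds 0) := by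
  set Φ : ℝ → E := fun ω => ∫ v, Complex.exp (↑(ω * v) * I) • f v
  have hΦ := tendsto_integral_exp_mul_I_smul_cocompact f
  have hint : ∀ ω : ℝ, Integrable (fun v => Complex.exp (↑(ω * v) * I) • f v) :=
    fun ω => hf.bdd_smul 1 (by fun_prop) (ae_of_all _ fun v => by
      rw [Complex.norm_exp_ofReal_mul_I])
  have hsplit : ∀ ω : ℝ, ∫ v, Real.sin (ω * v) • f v = (I / 2) • (Φ (-ω) - Φ ω) := by
    intro ω
    rw [← integral_sub (hint _) (hint _), ← integral_smul]
    refine integral_congr_ae (ae_of_all _ fun v => ?_)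
    have hsin : (Real.sin (ω * v) : ℂ) =
        I / 2 * (Complex.exp (↑(-ω * v) * I) - Complex.exp (↑(ω * v) * I)) := by
      push_cast
      rw [neg_mul]
      linear_combination (1 / 2 : ℂ) * Complex.two_sin (ω * v)
    simp only
    rw [← Complex.coe_smul, hsin, mul_smul, sub_smul]
  have hlim : Tendsto (fun ω => (I / 2) • (Φ (-ω) - Φ ω)) atTop (nhds ((I / 2) • (0 - 0))) :=
    ((hΦ.comp (tendsto_neg_atTop_atBot.mono_right atBot_le_cocompact)).sub
      (hΦ.mono_left atTop_le_cocompact)).const_smul _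
  simpa [hsplit] using hlim

theorem tendsto_setIntegral_sin_mul_smul_atTop {f : ℝ → E} {s : Set ℝ} (hs : MeasurableSet s)
    (hf : IntegrableOn f s) :
    Tendsto (fun ω : ℝ => ∫ v in s, Real.sin (ω * v) • f v) atTop (nhds 0) := by
  refine (tendsto_integral_sin_mul_smul_atTop ((integrable_indicator_iff hs).2 hf)).congr
    fun ω => ?_
  rw [← integral_indicator hs]
  exact integral_congr_ae (ae_of_all _ fun v =>
    (Set.indicator_smul_apply s (fun v => Real.sin (ω * v)) f v).symm)

theorem tendsto_intervalIntegral_sin_mul_smul_atTop {f : ℝ → E} {a b : ℝ}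
    (hf : IntervalIntegrable f volume a b) :
    Tendsto (fun ω : ℝ => ∫ v in a..b, Real.sin (ω * v) • f v) atTop (nhds 0) := by
  simpa [intervalIntegral] using
    (tendsto_setIntegral_sin_mul_smul_atTop measurableSet_Ioc hf.1).sub
      (tendsto_setIntegral_sin_mul_smul_atTop measurableSet_Ioc hf.2)

end RiemannLebesgue

theorem intervalIntegrable_inv_sin_half_smul {E : Type*} [NormedAddCommGroup E]
    [NormedSpace ℝ E] {f : ℝ → E} {K : ℝ} (hf : AEStronglyMeasurable f)
    (hK : ∀ u, ‖f u‖ ≤ K * |u|) :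
    IntervalIntegrable (fun u => (Real.sin (u / 2))⁻¹ • f u) volume (-π) π := by
  have hK0 : 0 ≤ K := by
    have := (norm_nonneg _).trans (hK π)
    rwa [abs_of_pos pi_pos, mul_nonneg_iff_of_pos_right pi_pos] at this
  have hbound : ∀ u ∈ Set.Ioc (-π) π, ‖(Real.sin (u / 2))⁻¹ • f u‖ ≤ K * π := by
    intro u hu
    have hu : |u| ≤ π := abs_le.2 ⟨hu.1.le, hu.2⟩
    have hsin : |u| / π ≤ |Real.sin (u / 2)| := by
      have := mul_abs_le_abs_sin (x := u / 2) (by rw [abs_div, abs_two]; linarith)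
      rwa [abs_div, abs_two, div_mul_div_comm, mul_comm π, ← div_div,
        mul_div_cancel_left₀ _ two_ne_zero] at this
    rw [norm_smul, norm_inv, Real.norm_eq_abs]
    rcases (abs_nonneg (Real.sin (u / 2))).eq_or_lt with hs | hs
    · rw [← hs, inv_zero, zero_mul]
      positivity
    · rw [inv_mul_le_iff₀ hs]
      calc ‖f u‖ ≤ K * |u| := hK u
        _ = K * π * (|u| / π) := by field_simp
        _ ≤ |Real.sin (u / 2)| * (K * π) := by rw [mul_comm]; gcongr
  refine (intervalIntegrable_iff_integrableOn_Ioc_of_le (by linarith [pi_pos])).2 ?_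
  refine Measure.integrableOn_of_bounded measure_Ioc_lt_top.ne ?_
    ((ae_restrict_iff' measurableSet_Ioc).2 (ae_of_all _ hbound))
  exact (by fun_prop : Measurable fun u => (Real.sin (u / 2))⁻¹).aestronglyMeasurable.smul hf

theorem stmt2_general (ψ : ℝ → ℂ) (C : ℝ)
    (hlip : ∀ u v, ‖ψ u - ψ v‖ ≤ C * |u - v|)
    (t : ℝ) :
    Tendsto (fun N : ℕ =>
        (1 / (2 * π) : ℂ) * ∫ u in (-π)..π,
          (ψ (u + t) - ψ (-u - t) - ψ t + ψ (-t)) *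
            ((Real.sin ((2 * N + 1) * u / 2) / Real.sin (u / 2) : ℝ) : ℂ))
      atTop (nhds 0) := by
  have hψ : Continuous ψ := (LipschitzWith.of_dist_le' (K := C) fun u v => by
    simpa only [dist_eq_norm, Real.norm_eq_abs] using hlip u v).continuous
  set f : ℝ → ℂ := fun u => ψ (u + t) - ψ (-u - t) - ψ t + ψ (-t)
  have hf : ∀ u, ‖f u‖ ≤ 2 * C * |u| := fun u =>
    calc ‖f u‖ = ‖(ψ (u + t) - ψ t) + (ψ (-t) - ψ (-u - t))‖ := by congr 1; ring
      _ ≤ C * |u + t - t| + C * |-t - (-u - t)| :=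
        (norm_add_le _ _).trans (add_le_add (hlip _ _) (hlip _ _))
      _ = 2 * C * |u| := by ring_nf
  have hRL := tendsto_intervalIntegral_sin_mul_smul_atTop
    (intervalIntegrable_inv_sin_half_smul (by fun_prop) hf)
  have hfreq : Tendsto (fun N : ℕ => (2 * N + 1) / 2 : ℕ → ℝ) atTop atTop :=
    ((tendsto_natCast_atTop_atTop.const_mul_atTop two_pos).atTop_add
      tendsto_const_nhds).atTop_div_const two_pos
  have hlim := (hRL.comp hfreq).const_mul (1 / (2 * π) : ℂ)
  rw [mul_zero] at hlim
  refine hlim.congr fun N => ?_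
  simp only [Function.comp_apply]
  congr 1
  refine intervalIntegral.integral_congr fun u _ => ?_
  simp only [f, Complex.real_smul, div_mul_eq_mul_div]
  push_cast
  ring

theorem stmt2 (ψ : ℝ → ℂ) (C : ℝ)
    (hper : ∀ u, ψ (u + 2 * π) = ψ u)
    (hlip : ∀ u v, ‖ψ u - ψ v‖ ≤ C * |u - v|)
    (t : ℝ) (ht : t ∈ Set.Icc (-π) π) :
    Tendsto (fun N : ℕ =>
        (1 / (2 * π) : ℂ) * ∫ u in (-π)..π,
          (ψ (u + t) - ψ (-u - t) - ψ t + ψ (-t)) *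
            ((Real.sin ((2 * N + 1) * u / 2) / Real.sin (u / 2) : ℝ) : ℂ))
      atTop (nhds 0) :=
  stmt2_general ψ C hlip t
end

section
/- For b > 0 and s with 0 < Re(s), the integral ∫₀^∞ y^{s−1} K₀(by) dy converges and equals 2^{s−2} b^{−s} Γ(s/2)², where K₀ is the modified Bessel function of the second kind of order zero. -/
open MeasureTheory Real Complex

/-!
Since `cosh` is even, `K₀(y) = ½ ∫_ℝ e^{-y cosh t} dt`. Exchanging the order of integration
and using `∫₀^∞ y^{s-1} e^{-ry} dy = Γ(s) r^{-s}`, the Mellin transform of `K₀` at `s` is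
`½ Γ(s) ∫_ℝ (cosh t)^{-s} dt`. The substitution `x = sigmoid (2t) = 1 / (1 + e^{-2t})`, for
which `x (1 - x) = (2 cosh t)^{-2}` and `dx = 2 x (1 - x) dt`, maps `ℝ` onto `(0, 1)` and turns
`∫_ℝ (2 cosh t)^{-s} dt` into `½ B(s/2, s/2)`; finally `Γ(s) B(s/2, s/2) = Γ(s/2)²`.
The factor `b^{-s}` is the scaling rule of the Mellin transform.
-/

open Set

lemma sigmoid_two_mul_mul_one_sub_self (t : ℝ) :
    sigmoid (2 * t) * (1 - sigmoid (2 * t)) = ((2 * Real.cosh t) ^ 2)⁻¹ := by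
  have hexp := Real.exp_pos t
  rw [← sigmoid_neg, sigmoid_def, sigmoid_def, Real.cosh_eq, neg_neg, Real.exp_neg,
    Real.exp_neg, two_mul, Real.exp_add]
  field_simp
  ring

lemma hasDerivAt_sigmoid_two_mul (t : ℝ) :
    HasDerivAt (fun t => sigmoid (2 * t)) (2 * ((2 * Real.cosh t) ^ 2)⁻¹) t := by
  have := (hasDerivAt_sigmoid (2 * t)).comp t ((hasDerivAt_id t).const_mul 2)
  rwa [sigmoid_two_mul_mul_one_sub_self, mul_one, mul_comm] at this

lemma range_sigmoid_two_mul : range (fun t => sigmoid (2 * t)) = Ioo 0 1 :=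
  (mul_left_surjective₀ two_ne_zero).range_comp sigmoid ▸ range_sigmoid

lemma ofReal_inv_sq_cpow {x : ℝ} (hx : 0 < x) (z : ℂ) :
    (((x ^ 2)⁻¹ : ℝ) : ℂ) ^ (z / 2) = (x : ℂ) ^ (-z) := by
  rw [← Real.rpow_natCast, ← Real.rpow_neg hx.le, ← cpow_mul_ofReal_nonneg hx.le]
  congr 1
  push_cast
  ring

lemma abs_deriv_smul_betaIntegrand_sigmoid_two_mul (s : ℂ) (t : ℝ) :
    |2 * ((2 * Real.cosh t) ^ 2)⁻¹| • (((sigmoid (2 * t) : ℝ) : ℂ) ^ (s / 2 - 1) *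
      (1 - ((sigmoid (2 * t) : ℝ) : ℂ)) ^ (s / 2 - 1)) =
      2 * ((2 * Real.cosh t : ℝ) : ℂ) ^ (-s) := by
  set x := sigmoid (2 * t)
  have hp : 0 < ((2 * Real.cosh t) ^ 2)⁻¹ := by positivity
  have hx : 0 ≤ x := sigmoid_nonneg _
  have hx' : 0 ≤ 1 - x := sub_nonneg.2 (sigmoid_le_one _)
  have hsub : (1 : ℂ) - x = ((1 - x : ℝ) : ℂ) := by push_cast; rfl
  rw [abs_of_pos (by positivity), hsub, ← mul_cpow_ofReal_nonneg hx hx', ← ofReal_mul,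
    sigmoid_two_mul_mul_one_sub_self, real_smul,
    ← ofReal_inv_sq_cpow (by positivity : 0 < 2 * Real.cosh t)]
  have hp0 : (((2 * Real.cosh t) ^ 2)⁻¹ : ℝ) ≠ (0 : ℂ) := by exact_mod_cast hp.ne'
  rw [cpow_sub _ _ hp0, cpow_one, ofReal_mul, ofReal_ofNat]
  generalize (((2 * Real.cosh t) ^ 2)⁻¹ : ℝ) = p at hp0 ⊢
  field_simp

lemma integrable_and_integral_two_mul_cosh_cpow_neg {s : ℂ} (hs : 0 < s.re) :
    Integrable (fun t : ℝ => ((2 * Real.cosh t : ℝ) : ℂ) ^ (-s)) ∧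
      ∫ t, ((2 * Real.cosh t : ℝ) : ℂ) ^ (-s) = betaIntegral (s / 2) (s / 2) / 2 := by
  have hu : 0 < (s / 2).re := by simpa using half_pos hs
  have hinj : InjOn (fun t : ℝ => sigmoid (2 * t)) univ :=
    (sigmoid_injective.comp (mul_right_injective₀ two_ne_zero)).injOn
  have hderiv : ∀ t ∈ univ, HasDerivWithinAt (fun t : ℝ => sigmoid (2 * t))
      (2 * ((2 * Real.cosh t) ^ 2)⁻¹) univ t :=
    fun t _ => (hasDerivAt_sigmoid_two_mul t).hasDerivWithinAt
  have hrange : (fun t : ℝ => sigmoid (2 * t)) '' univ = Ioo 0 1 := by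
    rw [image_univ, range_sigmoid_two_mul]
  have hB := betaIntegral_convergent hu hu
  rw [intervalIntegrable_iff_integrableOn_Ioo_of_le zero_le_one, ← hrange,
    integrableOn_image_iff_integrableOn_abs_deriv_smul MeasurableSet.univ hderiv hinj] at hB
  simp only [abs_deriv_smul_betaIntegrand_sigmoid_two_mul, integrableOn_univ] at hB
  refine ⟨(integrable_const_mul_iff (isUnit_iff_ne_zero.2 two_ne_zero) _).1 hB, ?_⟩
  rw [betaIntegral, intervalIntegral.integral_of_le zero_le_one, integral_Ioc_eq_integral_Ioo,
    ← hrange, integral_image_eq_integral_abs_deriv_smul MeasurableSet.univ hderiv hinj]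
  simp only [abs_deriv_smul_betaIntegrand_sigmoid_two_mul, setIntegral_univ, integral_const_mul]
  ring

lemma mellinConvergent_cexp_neg_mul {s : ℂ} (hs : 0 < s.re) {r : ℝ} (hr : 0 < r) :
    MellinConvergent (fun y : ℝ => cexp (-(r * y))) s := by
  have h : MellinConvergent (fun y : ℝ => cexp (-y)) s :=
    (Complex.GammaIntegral_convergent hs).congr_fun (fun y _ => by simp [ofReal_exp, mul_comm])
      measurableSet_Ioi
  simpa using (MellinConvergent.comp_mul_left hr).2 h

section Fubini

variable {α : Type*} [MeasurableSpace α] {μ : Measure α} [SFinite μ] {g : α → ℝ} {s : ℂ}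

theorem mellinConvergent_and_mellin_integral_exp_neg_mul (hg : Measurable g)
    (hg_pos : ∀ t, 0 < g t) (hs : 0 < s.re) (hint : Integrable (fun t => (g t : ℂ) ^ (-s)) μ) :
    MellinConvergent (fun y : ℝ => ((∫ t, rexp (-y * g t) ∂μ : ℝ) : ℂ)) s ∧
      mellin (fun y : ℝ => ((∫ t, rexp (-y * g t) ∂μ : ℝ) : ℂ)) s =
        Gamma s * ∫ t, (g t : ℂ) ^ (-s) ∂μ := by
  set ν := volume.restrict (Ioi (0 : ℝ))
  set F : α → ℝ → ℂ := fun t y => (y : ℂ) ^ (s - 1) * cexp (-(g t * y))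
  have hF_slice : ∀ t, Integrable (F t) ν := fun t => mellinConvergent_cexp_neg_mul hs (hg_pos t)
  have hF_slice_integral : ∀ t, ∫ y, F t y ∂ν = Gamma s * (g t : ℂ) ^ (-s) := fun t => by
    rw [integral_cpow_mul_exp_neg_mul_Ioi hs (hg_pos t), one_div, inv_cpow_ofReal_nonneg
      (hg_pos t).le, ← cpow_neg, mul_comm]
  have hF_slice_norm :
      ∀ t, ∫ y, ‖F t y‖ ∂ν = Real.Gamma s.re * ‖(g t : ℂ) ^ (-s)‖ := fun t => by
    have hnorm : ∀ y ∈ Ioi (0 : ℝ), ‖F t y‖ = y ^ (s.re - 1) * rexp (-(g t * y)) :=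
      fun y hy => by
      simp [F, norm_cpow_eq_rpow_re_of_pos hy, Complex.norm_exp]
    rw [setIntegral_congr_fun measurableSet_Ioi hnorm, Real.integral_rpow_mul_exp_neg_mul_Ioi hs
      (hg_pos t), norm_cpow_eq_rpow_re_of_pos (hg_pos t), one_div, Real.inv_rpow (hg_pos t).le,
      ← Real.rpow_neg (hg_pos t).le, neg_re, mul_comm]
  have hF_meas : AEStronglyMeasurable (Function.uncurry F) (μ.prod ν) := by
    apply Measurable.aestronglyMeasurable
    unfold F
    fun_prop
  have hF : Integrable (Function.uncurry F) (μ.prod ν) := by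
    refine (integrable_prod_iff hF_meas).2 ⟨.of_forall hF_slice, ?_⟩
    simpa only [Function.uncurry_apply_pair, hF_slice_norm] using hint.norm.const_mul _
  have hK : ∀ y : ℝ,
      (y : ℂ) ^ (s - 1) • ((∫ t, rexp (-y * g t) ∂μ : ℝ) : ℂ) = ∫ t, F t y ∂μ := by
    intro y
    rw [← integral_complex_ofReal, smul_eq_mul, ← integral_const_mul]
    congr 1 with t
    simp only [F, ofReal_exp]
    push_cast
    ring_nf
  refine ⟨?_, ?_⟩
  · rw [MellinConvergent, IntegrableOn]
    simp only [hK]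
    exact hF.integral_prod_right
  · rw [mellin]
    simp only [hK]
    rw [← integral_integral_swap hF]
    simp only [hF_slice_integral, integral_const_mul]

end Fubini

lemma integrable_and_integral_cosh_cpow_neg {s : ℂ} (hs : 0 < s.re) :
    Integrable (fun t : ℝ => (Real.cosh t : ℂ) ^ (-s)) ∧
      ∫ t, (Real.cosh t : ℂ) ^ (-s) = 2 ^ (s - 1) * betaIntegral (s / 2) (s / 2) := by
  have hcosh :
      ∀ t, (Real.cosh t : ℂ) ^ (-s) = 2 ^ s * ((2 * Real.cosh t : ℝ) : ℂ) ^ (-s) := by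
    intro t
    rw [ofReal_mul, ← ofReal_ofNat, mul_cpow_ofReal_nonneg zero_le_two (Real.cosh_pos t).le,
      ofReal_ofNat, cpow_neg 2, mul_inv_cancel_left₀ (cpow_ne_zero_iff.2 (Or.inl two_ne_zero))]
  obtain ⟨hint, hval⟩ := integrable_and_integral_two_mul_cosh_cpow_neg hs
  simp only [hcosh]
  refine ⟨hint.const_mul _, ?_⟩
  rw [integral_const_mul, hval, cpow_sub _ _ two_ne_zero, cpow_one]
  ring

lemma K0_eq_half_integral (y : ℝ) : K0 y = 2⁻¹ * ∫ t, Real.exp (-y * Real.cosh t) := by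
  have h := integral_comp_abs (f := fun t => Real.exp (-y * Real.cosh t))
  simp only [Real.cosh_abs] at h
  rw [h, inv_mul_cancel_left₀ two_ne_zero, K0]

theorem mellinConvergent_and_mellin_K0 {s : ℂ} (hs : 0 < s.re) :
    MellinConvergent (fun y => (K0 y : ℂ)) s ∧
      mellin (fun y => (K0 y : ℂ)) s = 2 ^ (s - 2) * Gamma (s / 2) ^ 2 := by
  have hK0 : (fun y => (K0 y : ℂ)) =
      fun y => (2⁻¹ : ℂ) • ((∫ t, Real.exp (-y * Real.cosh t) : ℝ) : ℂ) := by
    ext y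
    rw [K0_eq_half_integral, smul_eq_mul]
    push_cast
    rfl
  obtain ⟨hint, hval⟩ := integrable_and_integral_cosh_cpow_neg hs
  obtain ⟨hconv, hmellin⟩ :=
    mellinConvergent_and_mellin_integral_exp_neg_mul Real.continuous_cosh.measurable
      Real.cosh_pos hs hint
  have hu : 0 < (s / 2).re := by simpa using half_pos hs
  have hbeta := Gamma_mul_Gamma_eq_betaIntegral hu hu
  rw [add_halves] at hbeta
  have h2 : (2 : ℂ) ^ (s - 1) = 2 * 2 ^ (s - 2) := by
    rw [show s - 1 = 1 + (s - 2) by ring, cpow_add _ _ two_ne_zero, cpow_one]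
  rw [hK0]
  refine ⟨hconv.const_smul _, ?_⟩
  rw [mellin_const_smul, hmellin, hval, smul_eq_mul, h2]
  linear_combination (-(2 : ℂ) ^ (s - 2)) * hbeta

theorem stmt8 (b : ℝ) (hb : 0 < b) (s : ℂ) (hs : 0 < s.re) :
    IntegrableOn (fun y : ℝ => (y : ℂ) ^ (s - 1) * (K0 (b * y) : ℂ)) (Set.Ioi 0) ∧
      ∫ y in Set.Ioi (0:ℝ), (y : ℂ) ^ (s - 1) * (K0 (b * y) : ℂ) =
        2 ^ (s - 2) * (b : ℂ) ^ (-s) * Complex.Gamma (s / 2) ^ 2 := by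
  obtain ⟨hconv, hmellin⟩ := mellinConvergent_and_mellin_K0 hs
  refine ⟨(MellinConvergent.comp_mul_left hb).2 hconv, ?_⟩
  have h := mellin_comp_mul_left (fun y => (K0 y : ℂ)) s hb
  rw [hmellin, smul_eq_mul] at h
  exact h.trans (by ring)
end
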